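/- If F is a definite Horn formula, B' a set of variables and x a variable with x ∉ B' and F ⊨ B' → x, then a clause with head x and body contained in B' can be derived by resolution: there is a clause B → x ∈ F with x ∉ B and a sequence of resolution steps of B → x against clauses of F^x yielding a clause B'' → x with B'' ⊆ B'. -/
import Mathlib


/-- A definite Horn clause: a finite body of variables implying a head variable. -/
structure Clause (V : Type) where
  body : Finset V
  head : V
deriving DecidableEq

variable {V : Type} [DecidableEq V]

/-- A model satisfies a clause when the head is true if the whole body is true. -/
def satClause (M : V → Prop) (c : Clause V) : Prop :=
  (∀ v ∈ c.body, M v) → M c.head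

/-- A model satisfies a set of clauses when it satisfies each of them. -/
def satSet (M : V → Prop) (S : Set (Clause V)) : Prop :=
  ∀ c ∈ S, satClause M c

/-- `EntV S A x`: the formula `S` together with the variables `A` entails variable `x`. -/
def EntV (S : Set (Clause V)) (A : Set V) (x : V) : Prop :=
  ∀ M : V → Prop, satSet M S → (∀ v ∈ A, M v) → M x

/-- `EntVS S A B`: `S ⊨ A → B`, i.e. `S` with `A` entails every variable of `B`. -/
def EntVS (S : Set (Clause V)) (A B : Set V) : Prop :=
  ∀ x ∈ B, EntV S A x

/-- `EntF S T`: `S` entails every clause of `T`. -/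
def EntF (S T : Set (Clause V)) : Prop :=
  ∀ c ∈ T, EntV S (↑c.body) c.head

/-- Logical equivalence of two sets of clauses: same models. -/
def EquivS (S T : Set (Clause V)) : Prop :=
  ∀ M : V → Prop, satSet M S ↔ satSet M T

/-- `BCN`: all variable consequences of `B` under the formula `S`. -/
def BCN (S : Set (Clause V)) (B : Set V) : Set V :=
  {x | EntV S B x}

/-- `RCN`: real consequences of `B` under `S`. -/
def RCN (S : Set (Clause V)) (B : Set V) : Set V :=
  {x | EntV S (BCN S B \ {x}) x}

/-- `F^x`: `F` without the clauses mentioning `x` in head or body. -/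
def Fx (F : Finset (Clause V)) (x : V) : Finset (Clause V) :=
  F.filter (fun c => x ∉ c.body ∧ c.head ≠ x)

/-- A formula is single-head when no two distinct clauses share the head. -/
def SingleHead (F : Finset (Clause V)) : Prop :=
  ∀ c ∈ F, ∀ d ∈ F, c.head = d.head → c = d

/-- `UCL(B,F)`: non-tautological clauses of `F` whose body is entailed by `B` according to `F`. -/
def UCL (B : Set V) (F : Finset (Clause V)) : Set (Clause V) :=
  {c | c ∈ F ∧ c.head ∉ c.body ∧ EntVS (↑F) B (↑c.body)}

/-- `UCL(B,G,F)`: clauses of `G` whose body is entailed by `B` according to `F`. -/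
def UCL3 (B : Set V) (G F : Finset (Clause V)) : Set (Clause V) :=
  {c | c ∈ G ∧ EntVS (↑F) B (↑c.body)}

/-- `SCL(B,F)`: clauses of strictly entailed bodies. -/
def SCL (B : Set V) (F : Finset (Clause V)) : Set (Clause V) :=
  {c | c.head ∉ c.body ∧ EntV (↑F) (↑c.body) c.head ∧
       EntVS (↑F) B (↑c.body) ∧ ¬ EntVS (↑F) (↑c.body) B}

/-- `BCL(B,F)`: clauses of equivalent bodies. -/
def BCL (B : Set V) (F : Finset (Clause V)) : Set (Clause V) :=
  {c | c.head ∉ c.body ∧ EntV (↑F) (↑c.body) c.head ∧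
       EntVS (↑F) B (↑c.body) ∧ EntVS (↑F) (↑c.body) B}

/-- `HCLOSE(H,S)`: body-minimal non-tautological entailed clauses with head in `H`. -/
def HCLOSE (H : Set V) (S : Set (Clause V)) : Set (Clause V) :=
  {c | EntV S (↑c.body) c.head ∧ c.head ∈ H ∧ c.head ∉ c.body ∧
       ∀ B'' : Finset V, B'' ⊂ c.body → ¬ EntV S (↑B'') c.head}

/-- One resolution step: resolve a clause of `S` into the body of `c`. -/
def Step (S : Set (Clause V)) (c d : Clause V) : Prop :=
  ∃ e ∈ S, e.head ∈ c.body ∧ d = ⟨(c.body \ {e.head}) ∪ e.body, c.head⟩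

/-- Bounded-depth forward-chaining derivability. -/
def DerN (S : Set (Clause V)) (B : Set V) : ℕ → V → Prop
  | 0, v => v ∈ B
  | (n+1), v => DerN S B n v ∨ ∃ e ∈ S, e.head = v ∧ ∀ w ∈ e.body, DerN S B n w

lemma DerN_succ {S : Set (Clause V)} {B : Set V} {n : ℕ} {v : V}
    (h : DerN S B n v) : DerN S B (n+1) v := Or.inl h

lemma DerN_mono {S : Set (Clause V)} {B : Set V} {n m : ℕ} (hnm : n ≤ m) {v : V}
    (h : DerN S B n v) : DerN S B m v := by
  induction hnm with
  | refl => exact h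
  | step _ ih => exact Or.inl ih

lemma DerN_bound {S : Set (Clause V)} {B : Set V} (s : Finset V)
    (h : ∀ w ∈ s, ∃ n, DerN S B n w) : ∃ N, ∀ w ∈ s, DerN S B N w := by
  classical
  induction s using Finset.induction with
  | empty => exact ⟨0, by simp⟩
  | @insert a s ha ih =>
    obtain ⟨N, hN⟩ := ih (fun w hw => h w (Finset.mem_insert_of_mem hw))
    obtain ⟨M, hM⟩ := h a (Finset.mem_insert_self a s)
    refine ⟨max N M, ?_⟩
    intro w hw
    rcases Finset.mem_insert.1 hw with rfl | hw
    · exact DerN_mono (le_max_right _ _) hM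
    · exact DerN_mono (le_max_left _ _) (hN w hw)

lemma EntV_of_DerN {S : Set (Clause V)} {B : Set V} {n : ℕ} {v : V}
    (h : DerN S B n v) : EntV S B v := by
  induction n generalizing v with
  | zero => exact fun M _ hB => hB v h
  | succ n ih =>
    rcases h with h | ⟨e, heS, hhead, hbody⟩
    · exact ih h
    · intro M hM hB
      have := hM e heS (fun w hw => ih (hbody w hw) M hM hB)
      rwa [hhead] at this

/-- From a derivable body, resolution reaches a body inside `B`. -/
lemma resolve_of_DerN (S : Set (Clause V)) (B : Set V) (x : V) :
    ∀ n (b : Finset V), (∀ v ∈ b, DerN S B n v) →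
      ∃ b' : Finset V, ↑b' ⊆ B ∧
        Relation.ReflTransGen (Step S) ⟨b, x⟩ ⟨b', x⟩ := by
  classical
  intro n
  induction n with
  | zero => exact fun b hb => ⟨b, fun v hv => hb v hv, Relation.ReflTransGen.refl⟩
  | succ n ih =>
    suffices H : ∀ k (b : Finset V),
        (b.filter (fun v => ¬ DerN S B n v)).card = k →
        (∀ v ∈ b, DerN S B (n+1) v) →
        ∃ b' : Finset V, ↑b' ⊆ B ∧
          Relation.ReflTransGen (Step S) ⟨b, x⟩ ⟨b', x⟩ by
      intro b hb
      exact H _ b rfl hb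
    intro k
    induction k with
    | zero =>
      intro b hcard hb
      apply ih
      intro v hv
      by_contra hcon
      have : v ∈ b.filter (fun v => ¬ DerN S B n v) := Finset.mem_filter.2 ⟨hv, hcon⟩
      simp [Finset.card_eq_zero.1 hcard] at this
    | succ k ihk =>
      intro b hcard hb
      have hne : (b.filter (fun v => ¬ DerN S B n v)).Nonempty := by
        rw [← Finset.card_pos, hcard]; omega
      obtain ⟨v, hvf⟩ := hne
      obtain ⟨hvb, hvn⟩ := Finset.mem_filter.1 hvf
      rcases hb v hvb with hder | ⟨e, heS, hhead, hbody⟩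
      · exact absurd hder hvn
      · set b₂ : Finset V := (b \ {v}) ∪ e.body with hb₂
        have hstep : Step S ⟨b, x⟩ ⟨b₂, x⟩ := by
          refine ⟨e, heS, ?_, ?_⟩
          · rw [hhead]; exact hvb
          · simp [hb₂, hhead]
        have hb₂der : ∀ w ∈ b₂, DerN S B (n+1) w := by
          intro w hw
          rcases Finset.mem_union.1 hw with hw | hw
          · exact hb w (Finset.mem_sdiff.1 hw).1
          · exact DerN_succ (hbody w hw)
        have hfilt : (b₂.filter (fun v => ¬ DerN S B n v)).card = k := by
          have h1 : b₂.filter (fun v => ¬ DerN S B n v)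
              = (b.filter (fun v => ¬ DerN S B n v)).erase v := by
            ext w
            simp only [hb₂, Finset.mem_filter, Finset.mem_union, Finset.mem_sdiff,
              Finset.mem_singleton, Finset.mem_erase]
            constructor
            · rintro ⟨hw | hw, hnd⟩
              · exact ⟨hw.2, hw.1, hnd⟩
              · exact absurd (hbody w hw) hnd
            · rintro ⟨hwv, hwb, hnd⟩
              exact ⟨Or.inl ⟨hwb, hwv⟩, hnd⟩
          rw [h1, Finset.card_erase_of_mem hvf, hcard]; omega
        obtain ⟨b', hb'B, hrtg⟩ := ihk b₂ hfilt hb₂der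
        exact ⟨b', hb'B, Relation.ReflTransGen.head hstep hrtg⟩

theorem stmt19 (F : Finset (Clause V)) (B' : Set V) (x : V)
    (hx : x ∉ B') (h : EntV (↑F) B' x) :
    ∃ c ∈ F, c.head = x ∧ x ∉ c.body ∧
      ∃ d : Clause V, Relation.ReflTransGen (Step (↑(Fx F x))) c d ∧
        d.head = x ∧ (↑d.body : Set V) ⊆ B' := by
  classical
  set S : Set (Clause V) := ↑(Fx F x) with hS
  -- Fx cannot entail x
  have hnotx : ¬ EntV S B' x := by
    intro hent
    have := hent (fun v => EntV S B' v ∧ v ≠ x) ?_ ?_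
    · exact this.2 rfl
    · intro e heS hbody
      have heFx : e ∈ Fx F x := by exact_mod_cast heS
      obtain ⟨_, hxe⟩ := Finset.mem_filter.1 heFx
      refine ⟨?_, hxe.2⟩
      intro M hM hB
      exact hM e heS (fun w hw => (hbody w hw).1 M hM hB)
    · intro v hv
      exact ⟨fun M _ hB => hB v hv, fun hvx => hx (hvx ▸ hv)⟩
  -- the model M := entailed-by-Fx-from-B' does not satisfy F
  set M : V → Prop := fun v => EntV S B' v with hM
  have hMB : ∀ v ∈ B', M v := fun v hv => fun N _ hB => hB v hv
  have hnotF : ¬ satSet M (↑F) := fun hsat => hnotx (h M hsat hMB)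
  -- extract a failing clause: head x, body entailed
  obtain ⟨c, hcF, hcfail⟩ : ∃ c ∈ F, ¬ satClause M c := by
    by_contra hcon
    push_neg at hcon
    exact hnotF (fun c hc => hcon c (by exact_mod_cast hc))
  rw [satClause] at hcfail; push_neg at hcfail
  obtain ⟨hbodyM, hheadM⟩ := hcfail
  have hchead : c.head = x := by
    by_contra hne
    have hxbody : x ∉ c.body := fun hxb => hnotx (hbodyM x hxb)
    have hcFx : c ∈ Fx F x := Finset.mem_filter.2 ⟨hcF, hxbody, hne⟩
    apply hheadM
    intro N hN hB
    exact hN c (by exact_mod_cast hcFx) (fun w hw => hbodyM w hw N hN hB)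
  have hxbody : x ∉ c.body := fun hxb => hnotx (hbodyM x hxb)
  refine ⟨c, hcF, hchead, hxbody, ?_⟩
  -- entailment implies derivability
  have hder : ∀ v ∈ c.body, ∃ n, DerN S B' n v := by
    intro v hv
    refine hbodyM v hv (fun w => ∃ n, DerN S B' n w) ?_ (fun w hw => ⟨0, hw⟩)
    intro e heS hbody
    obtain ⟨N, hN⟩ := DerN_bound e.body hbody
    exact ⟨N + 1, Or.inr ⟨e, heS, rfl, hN⟩⟩
  obtain ⟨N, hN⟩ := DerN_bound c.body hder
  obtain ⟨b', hb'B, hrtg⟩ := resolve_of_DerN S B' x N c.body hN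
  refine ⟨⟨b', x⟩, ?_, rfl, hb'B⟩
  have : c = ⟨c.body, x⟩ := by cases c; simp_all
  rwa [this]
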